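/- arXiv:0711.2406 — 2 statements merged into one kernel-verified Lean document; each statement's English description precedes it below -/
import Mathlib

section
/- For v(x) := c − √(R² − |x|²) defined on the open ball B_R(0) ⊂ ℝⁿ, the upward normal N(x) = (1+|∇v|²)^{-1/2}(−∇v(x), 1) equals (−x/R, √(R²−|x|²)/R), and for any symmetric (n+1)×(n+1) matrix function G satisfying G(p)p = 0, tG(tp) = G(p) for t > 0, the quantity Σᵢⱼ G_{ij}(−∇v(x),1) ∂ᵢⱼv(x) equals (1/R)·tr G(N(x)). -/
open Matrix BigOperators

/-!
Write `s = √(R² - |x|²)` and `q = (-x, s)`. Then `∇v = x / s`, `∂ᵢⱼv = (s² δᵢⱼ + xᵢxⱼ) / s³` and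
`1 + |∇v|² = R² / s²`, so `(-∇v, 1) = q / s` and `N = q / R`; by homogeneity
`G(-∇v, 1) = s G q` and `G N = R G q`. For a symmetric `A` with `A (y, t) = 0`, the rows of `A`
and its symmetry give `Σᵢⱼ Aᵢⱼ yᵢyⱼ = t² A_{n+1,n+1}`, hence `Σᵢⱼ Aᵢⱼ (t² δᵢⱼ + yᵢyⱼ) = t² tr A`;
for `A = G q` and `(y, t) = q` this is the claim.
-/

theorem Fin.smul_snoc {α M : Type*} [SMul α M] {n : ℕ} (a : α) (x : Fin n → M) (b : M) :
    a • (Fin.snoc x b : Fin (n + 1) → M) = Fin.snoc (a • x) (a • b) := by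
  ext k
  induction k using Fin.lastCases <;> simp

theorem Matrix.IsSymm.sum_mul_sq_smul_one_add_vecMulVec {α : Type*} [CommRing α] {n : ℕ}
    {A : Matrix (Fin (n + 1)) (Fin (n + 1)) α} (hA : A.IsSymm) {y : Fin n → α} {t : α}
    (hker : A *ᵥ Fin.snoc y t = 0) :
    ∑ i : Fin n, ∑ j : Fin n, A i.castSucc j.castSucc *
      (t ^ 2 • (1 : Matrix (Fin n) (Fin n) α) + vecMulVec y y) i j = t ^ 2 * A.trace := by
  have hrow (k : Fin (n + 1)) : ∑ j : Fin n, A k j.castSucc * y j = -(t * A k (Fin.last n)) := by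
    have := congrFun hker k
    simp only [mulVec, dotProduct, Fin.sum_univ_castSucc, Fin.snoc_castSucc, Fin.snoc_last,
      Pi.zero_apply] at this
    linear_combination this
  have hquad : ∑ i : Fin n, ∑ j : Fin n, A i.castSucc j.castSucc * (y i * y j)
      = t ^ 2 * A (Fin.last n) (Fin.last n) := calc
    _ = ∑ i : Fin n, y i * ∑ j : Fin n, A i.castSucc j.castSucc * y j := by
      simp only [Finset.mul_sum]; congr! 2; ring
    _ = -t * ∑ i : Fin n, A (Fin.last n) i.castSucc * y i := by
      rw [Finset.mul_sum]; congr! 1 with i; rw [hrow, hA.apply]; ring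
    _ = t ^ 2 * A (Fin.last n) (Fin.last n) := by rw [hrow]; ring
  simp only [add_apply, smul_apply, one_apply, vecMulVec_apply, smul_eq_mul, mul_add,
    Finset.sum_add_distrib, hquad, mul_ite, mul_one, mul_zero, Finset.sum_ite_eq,
    Finset.mem_univ, if_true, trace, diag, Fin.sum_univ_castSucc]
  rw [← Finset.sum_mul]
  ring

section SphericalCap

variable {ι : Type*} [Fintype ι]

noncomputable def Matrix.dotProductCLM (y : ι → ℝ) : (ι → ℝ) →L[ℝ] ℝ :=
  ∑ i, y i • ContinuousLinearMap.proj i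

@[simp]
theorem Matrix.dotProductCLM_apply (y h : ι → ℝ) : dotProductCLM y h = y ⬝ᵥ h := by
  simp [dotProductCLM, dotProduct]

theorem hasFDerivAt_dotProduct_self (y : ι → ℝ) :
    HasFDerivAt (fun z : ι → ℝ => z ⬝ᵥ z) ((2 : ℝ) • dotProductCLM y) y := by
  refine (HasFDerivAt.fun_sum fun i (_ : i ∈ Finset.univ) =>
    (hasFDerivAt_apply i y).fun_mul (hasFDerivAt_apply (𝕜 := ℝ) i y)).congr_fderiv ?_
  ext h
  simp [dotProduct, two_mul, Finset.sum_add_distrib]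

theorem HasDerivAt.hasFDerivAt_comp_dotProduct_self {g : ℝ → ℝ} {g' : ℝ} {y : ι → ℝ}
    (hg : HasDerivAt g g' (y ⬝ᵥ y)) :
    HasFDerivAt (fun z => g (z ⬝ᵥ z)) ((2 * g') • dotProductCLM y) y :=
  (HasDerivAt.comp_hasFDerivAt (f := fun z : ι → ℝ => z ⬝ᵥ z) y hg
    (hasFDerivAt_dotProduct_self y)).congr_fderiv (by rw [smul_smul, mul_comm])

theorem sqrt_one_add_dotProduct_inv_smul_self {R s : ℝ} (hR : 0 < R) (hs : 0 < s) {x : ι → ℝ}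
    (h : s ^ 2 + x ⬝ᵥ x = R ^ 2) : √(1 + s⁻¹ • x ⬝ᵥ s⁻¹ • x) = R / s := by
  rw [smul_dotProduct, dotProduct_smul, smul_eq_mul, smul_eq_mul,
    ← Real.sqrt_sq (div_pos hR hs).le]
  congr 1
  field_simp
  exact h

noncomputable def lowerSphericalCap (c R : ℝ) (z : ι → ℝ) : ℝ :=
  c - √(R ^ 2 - z ⬝ᵥ z)

theorem hasFDerivAt_lowerSphericalCap (c : ℝ) {R : ℝ} {y : ι → ℝ} (hy : y ⬝ᵥ y < R ^ 2) :
    HasFDerivAt (lowerSphericalCap c R) ((√(R ^ 2 - y ⬝ᵥ y))⁻¹ • dotProductCLM y) y := by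
  have hpos : 0 < R ^ 2 - y ⬝ᵥ y := sub_pos.2 hy
  have hg : HasDerivAt (fun r => c - √(R ^ 2 - r)) (2 * √(R ^ 2 - y ⬝ᵥ y))⁻¹ (y ⬝ᵥ y) := by
    refine ((((hasDerivAt_id' _).const_sub (R ^ 2)).sqrt hpos.ne').const_sub c).congr_deriv ?_
    rw [neg_div, neg_neg, one_div]
  refine hg.hasFDerivAt_comp_dotProduct_self.congr_fderiv ?_
  rw [mul_inv, ← mul_assoc, mul_inv_cancel₀ two_ne_zero, one_mul]

variable [DecidableEq ι]

theorem fderiv_lowerSphericalCap_apply_single (c : ℝ) {R : ℝ} {y : ι → ℝ}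
    (hy : y ⬝ᵥ y < R ^ 2) (j : ι) :
    fderiv ℝ (lowerSphericalCap c R) y (Pi.single j 1) = y j / √(R ^ 2 - y ⬝ᵥ y) := by
  rw [(hasFDerivAt_lowerSphericalCap c hy).fderiv]
  simp [div_eq_inv_mul]

theorem fderiv_fderiv_lowerSphericalCap_apply_single (c : ℝ) {R : ℝ} {y : ι → ℝ}
    (hy : y ⬝ᵥ y < R ^ 2) (i j : ι) :
    fderiv ℝ (fun z => fderiv ℝ (lowerSphericalCap c R) z (Pi.single j 1)) y (Pi.single i 1)
      = ((R ^ 2 - y ⬝ᵥ y) • (1 : Matrix ι ι ℝ) + vecMulVec y y) i j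
          / √(R ^ 2 - y ⬝ᵥ y) ^ 3 := by
  have hpos : 0 < R ^ 2 - y ⬝ᵥ y := sub_pos.2 hy
  have hball : IsOpen {z : ι → ℝ | z ⬝ᵥ z < R ^ 2} := isOpen_lt (by fun_prop) continuous_const
  have hpartial : (fun z => fderiv ℝ (lowerSphericalCap c R) z (Pi.single j 1))
      =ᶠ[nhds y] fun z => z j * (√(R ^ 2 - z ⬝ᵥ z))⁻¹ := by
    filter_upwards [hball.mem_nhds hy] with z hz
    rw [fderiv_lowerSphericalCap_apply_single c hz, div_eq_mul_inv]
  have hg : HasDerivAt (fun r => (√(R ^ 2 - r))⁻¹) (2 * √(R ^ 2 - y ⬝ᵥ y) ^ 3)⁻¹ (y ⬝ᵥ y) := by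
    refine ((((hasDerivAt_id' _).const_sub (R ^ 2)).sqrt hpos.ne').inv
      (Real.sqrt_pos.2 hpos).ne').congr_deriv ?_
    field_simp
  rw [hpartial.fderiv_eq,
    ((hasFDerivAt_apply j y).fun_mul hg.hasFDerivAt_comp_dotProduct_self).fderiv]
  set s := √(R ^ 2 - y ⬝ᵥ y)
  have hs : 0 < s := Real.sqrt_pos.2 hpos
  have hs2 : R ^ 2 - y ⬝ᵥ y = s ^ 2 := (Real.sq_sqrt hpos.le).symm
  simp only [_root_.add_apply, _root_.smul_apply, dotProductCLM_apply, dotProduct_single_one,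
    ContinuousLinearMap.proj_apply, Pi.single_apply, Matrix.add_apply, Matrix.smul_apply,
    one_apply, vecMulVec_apply, smul_eq_mul, eq_comm (a := j), hs2]
  split_ifs <;> field_simp <;> ring

end SphericalCap

/-- Weighted mean curvature of a lower spherical cap: for
`v(x) = c − √(R² − |x|²)` on the ball of radius `R`, the upward normal is
`(−x/R, √(R²−|x|²)/R)` and `Σᵢⱼ G_{ij}(−∇v,1) ∂ᵢⱼv = (1/R)·tr G(N)` for any
symmetric weight matrix `G` with `G(p)p = 0` and `tG(tp) = G(p)` for `t > 0`. -/
theorem spherical_cap_weighted_mean_curvature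
    (n : ℕ) (R c : ℝ) (hR : 0 < R)
    (v : (Fin n → ℝ) → ℝ)
    (hv : ∀ x : Fin n → ℝ, v x = c - Real.sqrt (R ^ 2 - x ⬝ᵥ x))
    (G : (Fin (n + 1) → ℝ) → Matrix (Fin (n + 1)) (Fin (n + 1)) ℝ)
    (hsymm : ∀ p : Fin (n + 1) → ℝ, p ≠ 0 → (G p).IsSymm)
    (hker : ∀ p : Fin (n + 1) → ℝ, p ≠ 0 → (G p).mulVec p = 0)
    (hhom : ∀ p : Fin (n + 1) → ℝ, p ≠ 0 → ∀ t : ℝ, 0 < t → t • G (t • p) = G p)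
    (x : Fin n → ℝ) (hx : x ⬝ᵥ x < R ^ 2)
    (gradv : Fin n → ℝ) (hgrad : ∀ i, gradv i = fderiv ℝ v x (Pi.single i 1))
    (N : Fin (n + 1) → ℝ)
    (hN : N = (Real.sqrt (1 + gradv ⬝ᵥ gradv))⁻¹ •
      (Fin.snoc (fun i => -gradv i) 1 : Fin (n + 1) → ℝ)) :
    N = (Fin.snoc (fun i => -x i / R) (Real.sqrt (R ^ 2 - x ⬝ᵥ x) / R) :
        Fin (n + 1) → ℝ) ∧
    ∑ i : Fin n, ∑ j : Fin n,
        G (Fin.snoc (fun k => -gradv k) 1 : Fin (n + 1) → ℝ) i.castSucc j.castSucc *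
          fderiv ℝ (fun y => fderiv ℝ v y (Pi.single j 1)) x (Pi.single i 1)
      = (1 / R) * (G N).trace := by
  obtain rfl : v = lowerSphericalCap c R := funext hv
  have hpos : 0 < R ^ 2 - x ⬝ᵥ x := sub_pos.2 hx
  set s := √(R ^ 2 - x ⬝ᵥ x) with hs_def
  have hs : 0 < s := Real.sqrt_pos.2 hpos
  have hs2 : s ^ 2 = R ^ 2 - x ⬝ᵥ x := Real.sq_sqrt hpos.le
  set q : Fin (n + 1) → ℝ := Fin.snoc (-x) s
  have hq : q ≠ 0 := fun h => hs.ne' (by simpa [q] using congrFun h (Fin.last n))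
  have hGq (t : ℝ) (ht : 0 < t) : G (t⁻¹ • q) = t • G q := by
    rw [← hhom q hq t⁻¹ (inv_pos.2 ht), smul_smul, mul_inv_cancel₀ ht.ne', one_smul]
  have hgradv : gradv = s⁻¹ • x := funext fun i => by
    rw [hgrad, fderiv_lowerSphericalCap_apply_single c hx, Pi.smul_apply, smul_eq_mul,
      inv_mul_eq_div]
  have hp : (Fin.snoc (fun k => -gradv k) 1 : Fin (n + 1) → ℝ) = s⁻¹ • q := by
    rw [Fin.smul_snoc, smul_eq_mul, inv_mul_cancel₀ hs.ne', hgradv, smul_neg]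
    rfl
  obtain rfl : N = R⁻¹ • q := by
    rw [hN, hp, hgradv, sqrt_one_add_dotProduct_inv_smul_self hR hs (by linarith), smul_smul]
    field_simp
  constructor
  · ext k
    induction k using Fin.lastCases <;> simp [q, neg_div, inv_mul_eq_div]
  rw [hp, hGq R hR, hGq s hs, trace_smul]
  simp_rw [fderiv_fderiv_lowerSphericalCap_apply_single c hx, Matrix.smul_apply, smul_eq_mul]
  rw [← hs_def, ← hs2]
  calc _ = (s ^ 2)⁻¹ * ∑ i : Fin n, ∑ j : Fin n, G q i.castSucc j.castSucc *
        (s ^ 2 • (1 : Matrix (Fin n) (Fin n) ℝ) + vecMulVec (-x) (-x)) i j := by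
        simp_rw [Finset.mul_sum, neg_vecMulVec, vecMulVec_neg, neg_neg]
        congr! 2
        field_simp
    _ = 1 / R * (R * (G q).trace) := by
      rw [(hsymm q hq).sum_mul_sq_smul_one_add_vecMulVec (hker q hq)]
      field_simp
end

section
/- Let u ∈ C²(Ω) define the graph X(x) = (x, u(x)) with first fundamental form g = E + ∇u∇uᵀ, second fundamental form b_{ij} = (1+|∇u|²)^{-1/2} ∂ᵢⱼu, and upper normal N = (1+|∇u|²)^{-1/2}(−∇u,1). Let G satisfy G(p)p = 0, G symmetric, and tG(tp) = G(p) for t > 0. Then tr(g⁻¹ A_G g⁻¹ b) = Σᵢⱼ G_{ij}(−∇u,1) ∂ᵢⱼu, where A_G := (DX)ᵀ G(N) DX with DX the (n+1)×n Jacobian of X. -/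
open Matrix BigOperators

/-- Lemma 1 of Section 2: for the graph `X(x) = (x, u(x))` with first
fundamental form `g = E + ∇u∇uᵀ`, weighted first fundamental form
`A_G = (DX)ᵀ G(N) DX` and second fundamental form
`b = (1+|∇u|²)^{-1/2} D²u`, the weighted mean curvature is
`tr(g⁻¹ A_G g⁻¹ b) = Σᵢⱼ G_{ij}(−∇u,1) ∂ᵢⱼu`. -/
theorem graph_weighted_mean_curvature_equation
    (n : ℕ) (u : (Fin n → ℝ) → ℝ) (x : Fin n → ℝ)
    (hureg : ContDiffAt ℝ 2 u x)
    (G : (Fin (n + 1) → ℝ) → Matrix (Fin (n + 1)) (Fin (n + 1)) ℝ)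
    (hsymm : ∀ p : Fin (n + 1) → ℝ, p ≠ 0 → (G p).IsSymm)
    (hker : ∀ p : Fin (n + 1) → ℝ, p ≠ 0 → (G p).mulVec p = 0)
    (hhom : ∀ p : Fin (n + 1) → ℝ, p ≠ 0 → ∀ t : ℝ, 0 < t → t • G (t • p) = G p)
    (q : Fin n → ℝ) (hq : ∀ i, q i = fderiv ℝ u x (Pi.single i 1))
    (uij : Fin n → Fin n → ℝ)
    (huij : ∀ i j, uij i j =
      fderiv ℝ (fun y => fderiv ℝ u y (Pi.single j 1)) x (Pi.single i 1))
    (N : Fin (n + 1) → ℝ)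
    (hN : N = (Real.sqrt (1 + q ⬝ᵥ q))⁻¹ •
      (Fin.snoc (fun i => -q i) 1 : Fin (n + 1) → ℝ))
    (DX : Matrix (Fin (n + 1)) (Fin n) ℝ)
    (hDX : ∀ μ i, DX μ i =
      Fin.lastCases (q i) (fun ν => if ν = i then 1 else 0) μ)
    (g : Matrix (Fin n) (Fin n) ℝ) (hg : g = 1 + vecMulVec q q)
    (AG : Matrix (Fin n) (Fin n) ℝ) (hAG : AG = DXᵀ * G N * DX)
    (b : Matrix (Fin n) (Fin n) ℝ)
    (hb : ∀ i j, b i j = (Real.sqrt (1 + q ⬝ᵥ q))⁻¹ * uij i j) :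
    (g⁻¹ * AG * g⁻¹ * b).trace
      = ∑ i : Fin n, ∑ j : Fin n,
          G (Fin.snoc (fun k => -q k) 1 : Fin (n + 1) → ℝ) i.castSucc j.castSucc *
            uij i j := by
  set p : Fin (n + 1) → ℝ := Fin.snoc (fun k => -q k) 1 with hpdef
  have hp : p ≠ 0 := by
    intro h
    have h1 := congrFun h (Fin.last n)
    simp [hpdef] at h1
  have hc : (0:ℝ) < 1 + q ⬝ᵥ q := by
    have : (0:ℝ) ≤ q ⬝ᵥ q := Finset.sum_nonneg fun i _ => mul_self_nonneg _
    linarith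
  set w : ℝ := Real.sqrt (1 + q ⬝ᵥ q) with hwdef
  have hw : 0 < w := Real.sqrt_pos.mpr hc
  have hw2 : w * w = 1 + q ⬝ᵥ q := Real.mul_self_sqrt hc.le
  -- homogeneity: G N = w • G p
  have hGN : G N = w • G p := by
    have h1 := hhom p hp w⁻¹ (inv_pos.mpr hw)
    rw [hN, ← h1, smul_smul, mul_inv_cancel₀ hw.ne', one_smul]
  -- kernel relation
  have hR : ∀ μ, G p μ (Fin.last n) = ∑ k, G p μ k.castSucc * q k := by
    intro μ
    have h0 : (G p).mulVec p μ = 0 := by rw [hker p hp]; rfl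
    rw [Matrix.mulVec, dotProduct, Fin.sum_univ_castSucc] at h0
    simp only [hpdef, Fin.snoc_castSucc, Fin.snoc_last, mul_one, mul_neg] at h0
    rw [Finset.sum_neg_distrib] at h0
    linarith
  have hS := hsymm p hp
  -- the truncated matrix
  set GG : Matrix (Fin n) (Fin n) ℝ :=
    Matrix.of fun i j => G p i.castSucc j.castSucc with hGG
  have hGGapp : ∀ i j, GG i j = G p i.castSucc j.castSucc := fun _ _ => rfl
  have hGGsymm : ∀ i j : Fin n, GG i j = GG j i := fun i j => (hS.apply _ _).symm
  -- consequences of kernel + symmetry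
  have e1 : ∀ i : Fin n, G p i.castSucc (Fin.last n) = ∑ k, GG i k * q k := fun i => hR _
  have e2 : ∀ j : Fin n, G p (Fin.last n) j.castSucc = ∑ m, q m * GG m j := by
    intro j
    calc G p (Fin.last n) j.castSucc = G p j.castSucc (Fin.last n) := hS.apply _ _
      _ = ∑ m, G p j.castSucc m.castSucc * q m := hR _
      _ = ∑ m, q m * GG m j := by
          apply Finset.sum_congr rfl
          intro m _
          rw [show G p j.castSucc m.castSucc = G p m.castSucc j.castSucc from hS.apply _ _,
            hGGapp]
          ring
  have e3 : G p (Fin.last n) (Fin.last n) = ∑ k, (∑ m, q m * GG m k) * q k := by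
    rw [hR]
    apply Finset.sum_congr rfl
    intro k _
    rw [e2 k]
  -- key identity: DXᵀ * G p * DX = g * GG * g
  have hM : DXᵀ * G p * DX = g * GG * g := by
    ext i j
    have lhs : (DXᵀ * G p * DX) i j
        = G p i.castSucc j.castSucc + q i * G p (Fin.last n) j.castSucc
          + (G p i.castSucc (Fin.last n) + q i * G p (Fin.last n) (Fin.last n)) * q j := by
      have inner : ∀ ν, (DXᵀ * G p) i ν
          = G p i.castSucc ν + q i * G p (Fin.last n) ν := by
        intro ν
        rw [Matrix.mul_apply, Fin.sum_univ_castSucc]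
        simp only [Matrix.transpose_apply, hDX, Fin.lastCases_castSucc, Fin.lastCases_last,
          ite_mul, one_mul, zero_mul, Finset.sum_ite_eq', Finset.mem_univ, if_true]
      rw [Matrix.mul_apply]
      simp only [inner]
      rw [Fin.sum_univ_castSucc]
      simp only [hDX, Fin.lastCases_castSucc, Fin.lastCases_last, mul_ite, mul_one, mul_zero,
        Finset.sum_ite_eq', Finset.mem_univ, if_true]
    have hgapp : ∀ a c : Fin n, g a c = (if a = c then 1 else 0) + q a * q c := by
      intro a c
      rw [hg]
      simp [Matrix.one_apply, vecMulVec_apply]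
    have innerS : ∀ k, (g * GG) i k = GG i k + q i * ∑ m, q m * GG m k := by
      intro k
      rw [Matrix.mul_apply]
      simp only [hgapp, add_mul, ite_mul, one_mul, zero_mul]
      rw [Finset.sum_add_distrib]
      simp only [Finset.sum_ite_eq', Finset.sum_ite_eq, Finset.mem_univ, if_true]
      rw [Finset.mul_sum]
      congr 1
      apply Finset.sum_congr rfl
      intro m _
      ring
    have rhs : (g * GG * g) i j
        = (GG i j + q i * ∑ m, q m * GG m j)
          + (∑ k, (GG i k + q i * ∑ m, q m * GG m k) * q k) * q j := by
      rw [Matrix.mul_apply]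
      simp only [innerS, hgapp, mul_add, mul_ite, mul_one, mul_zero]
      rw [Finset.sum_add_distrib]
      simp only [Finset.sum_ite_eq', Finset.sum_ite_eq, Finset.mem_univ, if_true]
      congr 1
      rw [Finset.sum_mul]
      apply Finset.sum_congr rfl
      intro k _
      ring
    rw [lhs, rhs, e1 i, e2 j, e3]
    have expand : ∑ k, (GG i k + q i * ∑ m, q m * GG m k) * q k
        = (∑ k, GG i k * q k) + q i * ∑ k, (∑ m, q m * GG m k) * q k := by
      rw [Finset.mul_sum, ← Finset.sum_add_distrib]
      apply Finset.sum_congr rfl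
      intro k _
      ring
    rw [expand, hGGapp]
  -- inverse of g
  set hmat : Matrix (Fin n) (Fin n) ℝ :=
    1 - ((1 + q ⬝ᵥ q)⁻¹) • vecMulVec q q with hhmat
  have hgh : g * hmat = 1 := by
    have hAA : vecMulVec q q * vecMulVec q q = (q ⬝ᵥ q) • vecMulVec q q := by
      ext i j
      rw [Matrix.mul_apply]
      simp only [vecMulVec_apply, Matrix.smul_apply, smul_eq_mul, dotProduct, Finset.sum_mul]
      apply Finset.sum_congr rfl
      intro k _
      ring
    rw [hg, hhmat, add_mul, one_mul, mul_sub, mul_one, Matrix.mul_smul, hAA, smul_smul]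
    have key : ((1 + q ⬝ᵥ q)⁻¹ * (q ⬝ᵥ q)) • vecMulVec q q + (1 + q ⬝ᵥ q)⁻¹ • vecMulVec q q
        = vecMulVec q q := by
      rw [← add_smul]
      have hcoef : (1 + q ⬝ᵥ q)⁻¹ * (q ⬝ᵥ q) + (1 + q ⬝ᵥ q)⁻¹ = 1 := by
        field_simp
        ring
      rw [hcoef, one_smul]
    calc 1 - (1 + q ⬝ᵥ q)⁻¹ • vecMulVec q q
          + (vecMulVec q q - ((1 + q ⬝ᵥ q)⁻¹ * (q ⬝ᵥ q)) • vecMulVec q q)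
        = 1 + (vecMulVec q q
            - (((1 + q ⬝ᵥ q)⁻¹ * (q ⬝ᵥ q)) • vecMulVec q q
               + (1 + q ⬝ᵥ q)⁻¹ • vecMulVec q q)) := by abel
      _ = 1 := by rw [key, sub_self, add_zero]
  have hginv : g⁻¹ = hmat := Matrix.inv_eq_right_inv hgh
  have hgr : g * g⁻¹ = 1 := by rw [hginv]; exact hgh
  have hgl : g⁻¹ * g = 1 := by
    rw [hginv]; exact mul_eq_one_comm.mp hgh
  -- simplify the product
  have hprod : g⁻¹ * AG * g⁻¹ = w • GG := by
    rw [hAG, hGN, Matrix.mul_smul, Matrix.smul_mul, hM]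
    rw [Matrix.mul_smul, Matrix.smul_mul]
    congr 1
    calc g⁻¹ * (g * GG * g) * g⁻¹ = (g⁻¹ * g) * (GG * (g * g⁻¹)) := by
          noncomm_ring
      _ = GG := by rw [hgl, hgr, one_mul, mul_one]
  rw [hprod]
  rw [Matrix.trace]
  simp only [Matrix.diag_apply, Matrix.mul_apply, Matrix.smul_apply, smul_eq_mul]
  have step : ∀ i j : Fin n, w * GG i j * b j i = GG i j * uij j i := by
    intro i j
    rw [hb]
    have hww : w * w⁻¹ = 1 := mul_inv_cancel₀ hw.ne'
    calc w * GG i j * (w⁻¹ * uij j i) = (w * w⁻¹) * (GG i j * uij j i) := by ring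
      _ = GG i j * uij j i := by rw [hww, one_mul]
  calc ∑ i, ∑ j, w * GG i j * b j i
      = ∑ i, ∑ j, GG i j * uij j i := by
        apply Finset.sum_congr rfl; intro i _
        apply Finset.sum_congr rfl; intro j _
        exact step i j
    _ = ∑ j, ∑ i, GG i j * uij j i := Finset.sum_comm
    _ = ∑ i : Fin n, ∑ j : Fin n, G p i.castSucc j.castSucc * uij i j := by
        apply Finset.sum_congr rfl; intro j _
        apply Finset.sum_congr rfl; intro i _
        rw [hGGsymm, hGGapp]
end
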